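/- Median characterization for absolute value loss: for ℓ(x,c) = |x − c| with right derivative ℓ'(x,c) = 1_{x ≤ c} − 1_{x > c}, the function λ(c) := E[d(F_X(X)) ℓ'(X,c)] equals 2 D(F_X(c)) − 1; thus a root c of λ satisfies D(F_X(c)) = 1/2, i.e. c is a median of X_D, and equivalently F_X(c) equals the median of the distribution D. -/

import Mathlib

/-!
Since `X` has no atoms, `F = cdf μ` is continuous and pushes `μ` forward to the uniform measure on
`[0, 1]` (probability integral transform). Moreover `{x | F x ≤ F c}` and `Iic c` differ by a
`μ`-null set, so `E[d(F X); X ≤ c] = ∫₀^{F c} d = D (F c)`, while `E[d(F X)] = D 1 = 1`. Since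
`ℓ'(x, c) = 2 · 1_{x ≤ c} - 1`, this gives `λ c = 2 D (F c) - 1`.
-/

open MeasureTheory Set ProbabilityTheory

lemma Set.Iic_inter_Icc {α : Type*} [Lattice α] (a b c : α) :
    Iic a ∩ Icc b c = Icc b (a ⊓ c) := by
  rw [← Ici_inter_Iic, inter_left_comm, Iic_inter_Iic, Ici_inter_Iic]

lemma integral_mul_ite_sub_ite {ν : Measure ℝ} {g : ℝ → ℝ} (hg : Integrable g ν) (c : ℝ) :
    ∫ x, g x * ((if x ≤ c then (1 : ℝ) else 0) - (if x ≤ c then (0 : ℝ) else 1)) ∂ν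
      = 2 * ∫ x in Iic c, g x ∂ν - ∫ x, g x ∂ν := by
  have h : (fun x ↦ g x * ((if x ≤ c then (1 : ℝ) else 0) - (if x ≤ c then (0 : ℝ) else 1)))
      = fun x ↦ 2 * (Iic c).indicator g x - g x := by
    ext x
    by_cases hx : x ≤ c
    · simp [hx]; ring
    · simp [hx]
  rw [h, integral_sub ((hg.indicator measurableSet_Iic).const_mul 2) hg, integral_const_mul,
    integral_indicator measurableSet_Iic]

namespace ProbabilityTheory

variable {μ : Measure ℝ} [IsProbabilityMeasure μ] [NullSingletonClass μ]

lemma continuous_cdf : Continuous (cdf μ) := by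
  refine continuous_iff_continuousAt.2 fun x ↦ ?_
  rw [(monotone_cdf μ).continuousAt_iff_leftLim_eq_rightLim, (cdf μ).rightLim_eq]
  have h : (cdf μ).measure {x} = 0 := by rw [measure_cdf]; exact measure_singleton x
  rw [StieltjesFunction.measure_singleton, ENNReal.ofReal_eq_zero] at h
  linarith [(monotone_cdf μ).leftLim_le (le_refl x)]

lemma measure_cdf_le {t : ℝ} (ht₀ : 0 ≤ t) (ht₁ : t < 1) :
    μ {x | cdf μ x ≤ t} = ENNReal.ofReal t := by
  set S := {x | cdf μ x ≤ t}
  obtain hS | hS := S.eq_empty_or_nonempty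
  · obtain rfl : 0 = t := by
      refine ht₀.eq_or_lt.resolve_right fun ht ↦ ?_
      obtain ⟨x, hx⟩ := ((tendsto_cdf_atBot μ).eventually_lt_const ht).exists
      exact hS.subset hx.le
    simp [hS]
  have hbdd : BddAbove S := by
    obtain ⟨b, hb⟩ := ((tendsto_cdf_atTop μ).eventually_const_lt ht₁).exists
    exact ⟨b, fun x hx ↦ le_of_not_gt fun hbx ↦ (hb.trans_le (monotone_cdf μ hbx.le)).not_ge hx⟩
  set a := sSup S
  have ha : a ∈ S := (isClosed_le continuous_cdf continuous_const).csSup_mem hS hbdd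
  have hSa : S = Iic a :=
    Subset.antisymm (fun x hx ↦ le_csSup hbdd hx) fun x hx ↦ (monotone_cdf μ hx).trans ha
  -- `t < cdf μ x` for all `x > a`, so `t ≤ cdf μ a` by continuity
  have hat : cdf μ a = t := by
    refine le_antisymm ha (ge_of_tendsto (continuous_cdf.continuousAt.tendsto.mono_left
      (nhdsWithin_le_nhds (s := Ioi a))) ?_)
    filter_upwards [self_mem_nhdsWithin] with x (hx : a < x)
    exact le_of_not_ge fun h ↦ hx.not_ge (le_csSup hbdd h)
  rw [hSa, ← ofReal_cdf, hat]

lemma map_cdf : μ.map (cdf μ) = volume.restrict (Icc 0 1) := by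
  refine Measure.ext_of_Iic _ _ fun t ↦ ?_
  rw [Measure.map_apply continuous_cdf.measurable measurableSet_Iic,
    Measure.restrict_apply measurableSet_Iic, Iic_inter_Icc, Real.volume_Icc, sub_zero]
  rcases lt_or_ge t 0 with ht₀ | ht₀
  · have : cdf μ ⁻¹' Iic t = ∅ :=
      eq_empty_of_forall_notMem fun x hx ↦ (ht₀.trans_le (cdf_nonneg μ x)).not_ge hx
    rw [this, measure_empty, ENNReal.ofReal_of_nonpos (min_le_of_left_le ht₀.le)]
  rcases lt_or_ge t 1 with ht₁ | ht₁
  · rw [min_eq_left ht₁.le]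
    exact measure_cdf_le ht₀ ht₁
  · have : cdf μ ⁻¹' Iic t = univ := eq_univ_of_forall fun x ↦ (cdf_le_one μ x).trans ht₁
    rw [this, measure_univ, min_eq_right ht₁, ENNReal.ofReal_one]

lemma cdf_le_cdf_ae_eq_Iic (c : ℝ) :
    {x | cdf μ x ≤ cdf μ c} =ᵐ[μ] Iic c := by
  refine (ae_eq_of_subset_of_measure_ge (fun x hx ↦ monotone_cdf μ hx) ?_
    measurableSet_Iic.nullMeasurableSet (measure_ne_top _ _)).symm
  change μ {x | cdf μ x ≤ cdf μ c} ≤ μ (Iic c)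
  rcases (cdf_le_one μ c).lt_or_eq with hc | hc
  · rw [measure_cdf_le (cdf_nonneg μ c) hc, ofReal_cdf]
  · rw [← ofReal_cdf, hc, ENNReal.ofReal_one]
    exact prob_le_one

variable {E : Type*} [NormedAddCommGroup E] {g : ℝ → E}

lemma integrable_comp_cdf (hg : IntegrableOn g (Icc 0 1)) : Integrable (fun x ↦ g (cdf μ x)) μ := by
  rw [IntegrableOn, ← map_cdf (μ := μ)] at hg
  exact (integrable_map_measure hg.aestronglyMeasurable continuous_cdf.aemeasurable).1 hg

variable [NormedSpace ℝ E]

lemma integral_comp_cdf (hg : AEStronglyMeasurable g (volume.restrict (Icc 0 1))) :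
    ∫ x, g (cdf μ x) ∂μ = ∫ y in Icc 0 1, g y := by
  rw [← map_cdf (μ := μ)] at hg ⊢
  exact (integral_map continuous_cdf.aemeasurable hg).symm

lemma setIntegral_Iic_comp_cdf (hg : AEStronglyMeasurable g (volume.restrict (Icc 0 1)))
    (c : ℝ) : ∫ x in Iic c, g (cdf μ x) ∂μ = ∫ y in Icc 0 (cdf μ c), g y := by
  rw [← map_cdf (μ := μ)] at hg
  rw [← setIntegral_congr_set (cdf_le_cdf_ae_eq_Iic c)]
  change ∫ x in cdf μ ⁻¹' Iic (cdf μ c), g (cdf μ x) ∂μ = _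
  rw [← setIntegral_map measurableSet_Iic hg continuous_cdf.aemeasurable, map_cdf,
    Measure.restrict_restrict measurableSet_Iic, Iic_inter_Icc, inf_of_le_left (cdf_le_one μ c)]

end ProbabilityTheory

/-- median characterization for absolute value loss: for
`ℓ(x,c) = |x − c|` with right derivative `ℓ'(x,c) = 1_{x ≤ c} − 1_{x > c}`,
the function `λ(c) = E[d(F_X(X)) ℓ'(X,c)]` equals `2 D(F_X(c)) − 1`; hence a root
`c` of `λ` satisfies `D(F_X(c)) = 1/2`, i.e. `c` is a median of `X_D`, equivalently
`F_X(c)` is the median of the distribution `D`. -/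
theorem stmt16 (μ : Measure ℝ) [IsProbabilityMeasure μ]
    (F D d f : ℝ → ℝ)
    (hf : μ = MeasureTheory.volume.withDensity (fun x => ENNReal.ofReal (f x)))
    (hF : ∀ x, F x = (μ (Iic x)).toReal)
    (hDdens : ∀ t ∈ Icc (0:ℝ) 1, D t = ∫ s in Icc (0:ℝ) t, d s)
    (hD1 : D 1 = 1) :
    (∀ c : ℝ, ∫ x, d (F x) *
        ((if x ≤ c then (1:ℝ) else 0) - (if x ≤ c then (0:ℝ) else 1)) ∂μ
      = 2 * D (F c) - 1)
    ∧ ∀ c : ℝ,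
        (∫ x, d (F x) *
          ((if x ≤ c then (1:ℝ) else 0) - (if x ≤ c then (0:ℝ) else 1)) ∂μ) = 0 →
        D (F c) = 1/2 := by
  have : NullSingletonClass μ := hf ▸ inferInstance
  obtain rfl : F = cdf μ := funext fun x ↦ (hF x).trans (cdf_eq_real μ x).symm
  have hd : IntegrableOn d (Icc 0 1) := by
    -- otherwise the Bochner integral defining `D 1` would be the junk value `0`
    by_contra h
    rw [hDdens 1 ⟨zero_le_one, le_rfl⟩, integral_undef h] at hD1
    exact zero_ne_one hD1
  have hlambda : ∀ c, ∫ x, d (cdf μ x) *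
      ((if x ≤ c then (1:ℝ) else 0) - (if x ≤ c then (0:ℝ) else 1)) ∂μ = 2 * D (cdf μ c) - 1 := by
    intro c
    rw [integral_mul_ite_sub_ite (integrable_comp_cdf hd), setIntegral_Iic_comp_cdf hd.1,
      integral_comp_cdf hd.1, ← hDdens _ ⟨cdf_nonneg μ c, cdf_le_one μ c⟩,
      ← hDdens 1 ⟨zero_le_one, le_rfl⟩, hD1]
  exact ⟨hlambda, fun c hc ↦ by linarith [hlambda c]⟩
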